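/- (Type B_N Weyl denominator formula) For any N nonzero complex numbers z₁, …, z_N, det_{1≤j,k≤N}( z_k^{j-N} − z_k^{N+1-j} ) = ∏_{ℓ=1}^{N} z_ℓ^{1-N} (1 − z_ℓ) · ∏_{1≤j<k≤N} (z_k − z_j)(1 − z_j z_k). -/

import Mathlib

/-!
With `t = z + z⁻¹`, the entry in row `j` is `(1 - z) W_{N-1-j}(t)`, where `W_a` is the monic
polynomial of degree `a` with `W_a(z + z⁻¹) = z⁻ᵃ + ⋯ + zᵃ`. Row operations turn the determinant
into a Vandermonde determinant in the `t_k`, and `z_j z_k (t_j - t_k) = (z_k - z_j)(1 - z_j z_k)`.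
-/

open Polynomial Matrix Finset

namespace Polynomial

variable (R : Type*) [CommRing R]

/-- Chebyshev polynomials of the fourth kind, rescaled as `Chebyshev.S` rescales `U`:
`chebyshevW R a` at `x + x⁻¹` is `x⁻ᵃ + ⋯ + xᵃ`. -/
noncomputable def chebyshevW : ℕ → R[X]
  | 0 => 1
  | 1 => X + 1
  | n + 2 => X * chebyshevW (n + 1) - chebyshevW n

variable {R}

theorem chebyshevW_monic_and_natDegree_eq [Nontrivial R] :
    ∀ a, (chebyshevW R a).Monic ∧ (chebyshevW R a).natDegree = a
  | 0 => ⟨monic_one, natDegree_one⟩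
  | 1 => by simpa [chebyshevW] using ⟨monic_X_add_C (1 : R), natDegree_X_add_C (1 : R)⟩
  | n + 2 => by
    obtain ⟨hm₁, hd₁⟩ := chebyshevW_monic_and_natDegree_eq (n + 1)
    have hd₀ := (chebyshevW_monic_and_natDegree_eq n).2
    have hXd : (X * chebyshevW R (n + 1)).natDegree = n + 2 := by
      rw [natDegree_X_mul hm₁.ne_zero, hd₁]
    have hlt : (chebyshevW R n).natDegree < (X * chebyshevW R (n + 1)).natDegree := by
      omega
    rw [chebyshevW]
    exact ⟨(monic_X.mul hm₁).sub_of_left (degree_lt_degree hlt),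
      by rw [natDegree_sub_eq_left_of_natDegree_lt hlt, hXd]⟩

theorem monic_chebyshevW [Nontrivial R] (a : ℕ) : (chebyshevW R a).Monic :=
  (chebyshevW_monic_and_natDegree_eq a).1

theorem natDegree_chebyshevW [Nontrivial R] (a : ℕ) : (chebyshevW R a).natDegree = a :=
  (chebyshevW_monic_and_natDegree_eq a).2

theorem chebyshevW_eval_add_of_mul_eq_one {x y : R} (h : x * y = 1) :
    ∀ a, (1 - x) * x ^ a * (chebyshevW R a).eval (x + y) = 1 - x ^ (2 * a + 1)
  | 0 => by simp [chebyshevW]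
  | 1 => by
    simp only [chebyshevW, eval_add, eval_X, eval_one]
    linear_combination (1 - x) * h
  | a + 2 => by
    have ih₁ := chebyshevW_eval_add_of_mul_eq_one h (a + 1)
    have ih₀ := chebyshevW_eval_add_of_mul_eq_one h a
    rw [chebyshevW, eval_sub, eval_mul, eval_X]
    linear_combination (x * (x + y)) * ih₁ - x ^ 2 * ih₀ + (1 - x ^ (2 * a + 3)) * h

theorem chebyshevW_eval_add_inv {K : Type*} [Field K] {x : K} (hx : x ≠ 0) (a : ℕ) :
    (1 - x) * (chebyshevW K a).eval (x + x⁻¹) = x ^ (-(a : ℤ)) - x ^ ((a : ℤ) + 1) := by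
  have h := chebyshevW_eval_add_of_mul_eq_one (mul_inv_cancel₀ hx) a
  generalize (chebyshevW K a).eval (x + x⁻¹) = E at h ⊢
  rw [_root_.zpow_neg, zpow_add_one₀ hx, zpow_natCast]
  field_simp
  linear_combination h

end Polynomial

namespace Matrix

variable {R : Type*} [CommRing R] {n : ℕ}

theorem det_vandermonde_comp_rev (v : Fin n → R) :
    (vandermonde (v ∘ Fin.rev)).det = ∏ i : Fin n, ∏ j ∈ Ioi i, (v i - v j) := by
  have h : vandermonde (v ∘ Fin.rev) =
      (projVandermonde 1 v).submatrix Fin.revPerm Fin.revPerm := by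
    ext i j
    simp [vandermonde_apply, projVandermonde_apply]
  rw [h, det_submatrix_equiv_self, det_projVandermonde]
  simp

theorem det_of_eval_rev (v : Fin n → R) (p : Fin n → R[X])
    (h_deg : ∀ i, (p i).natDegree = i) (h_monic : ∀ i, (p i).Monic) :
    (of fun i j => (p i.rev).eval (v j)).det = ∏ i : Fin n, ∏ j ∈ Ioi i, (v i - v j) := by
  have h : (of fun i j => (p i.rev).eval (v j)).submatrix Fin.revPerm Fin.revPerm
      = (of fun i j => (p j).eval ((v ∘ Fin.rev) i))ᵀ := by
    ext i j
    simp
  rw [← det_submatrix_equiv_self Fin.revPerm, h, det_transpose,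
    ← det_eval_matrixOfPolynomials_eq_det_vandermonde _ p h_deg h_monic,
    det_vandermonde_comp_rev]

end Matrix

theorem Fin.prod_prod_Ioi_mul {M : Type*} [CommMonoid M] {n : ℕ} (f : Fin n → M) :
    ∏ i : Fin n, ∏ j ∈ Ioi i, (f i * f j) = ∏ i : Fin n, f i ^ (n - 1) := by
  have hswap : ∏ i : Fin n, ∏ j ∈ Ioi i, f j = ∏ j : Fin n, ∏ _i ∈ Iio j, f j :=
    prod_comm' fun i j => by simp
  calc ∏ i : Fin n, ∏ j ∈ Ioi i, (f i * f j)
      = (∏ i : Fin n, ∏ _j ∈ Ioi i, f i) * ∏ j : Fin n, ∏ _i ∈ Iio j, f j := by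
        simp_rw [prod_mul_distrib]
        rw [hswap]
    _ = ∏ i : Fin n, f i ^ (n - 1) := by
        rw [← prod_mul_distrib]
        refine prod_congr rfl fun i _ => ?_
        rw [Finset.prod_const, Finset.prod_const, ← pow_add, Fin.card_Ioi, Fin.card_Iio,
          Nat.sub_add_cancel (by omega)]

/-- Type B_N Weyl denominator formula: for nonzero `z₁, …, z_N`,
`det( z_k^{j-N} − z_k^{N+1-j} ) = ∏_ℓ z_ℓ^{1-N} (1 − z_ℓ) ·
∏_{j<k} (z_k − z_j)(1 − z_j z_k)`, indices `j, k` running over `1, …, N`. -/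
theorem weyl_denominator_B (N : ℕ) (z : Fin N → ℂ) (hz : ∀ ℓ, z ℓ ≠ 0) :
    Matrix.det (Matrix.of fun j k : Fin N =>
        z k ^ (((j : ℕ) : ℤ) + 1 - (N : ℤ)) -
          z k ^ ((N : ℤ) + 1 - (((j : ℕ) : ℤ) + 1))) =
      (∏ ℓ : Fin N, z ℓ ^ (1 - (N : ℤ)) * (1 - z ℓ)) *
        ∏ j : Fin N, ∏ k ∈ Finset.Ioi j, (z k - z j) * (1 - z j * z k) := by
  set t : Fin N → ℂ := fun k => z k + (z k)⁻¹
  have hentry : (of fun j k : Fin N =>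
        z k ^ (((j : ℕ) : ℤ) + 1 - (N : ℤ)) - z k ^ ((N : ℤ) + 1 - (((j : ℕ) : ℤ) + 1)))
      = of fun j k => (1 - z k) * (chebyshevW ℂ (j.rev : ℕ)).eval (t k) := by
    ext j k
    have hrev : ((j.rev : ℕ) : ℤ) = N - 1 - j := by rw [Fin.val_rev]; omega
    rw [of_apply, of_apply, chebyshevW_eval_add_inv (hz k), hrev]
    congr 2 <;> ring
  have hpair (i j : Fin N) : (z j - z i) * (1 - z i * z j) = z i * z j * (t i - t j) := by
    simp only [t]
    field_simp [hz i, hz j]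
    ring
  have hcancel (k : Fin N) : z k ^ (1 - (N : ℤ)) * z k ^ (N - 1) = 1 := by
    rw [← zpow_natCast, ← zpow_add₀ (hz k), Nat.cast_sub (Nat.one_le_of_lt k.isLt)]
    simp
  calc _ = (∏ k, (1 - z k)) * ∏ i, ∏ j ∈ Ioi i, (t i - t j) := by
        rw [hentry, ← det_of_eval_rev t (fun i => chebyshevW ℂ i)
          (fun i => natDegree_chebyshevW i) (fun i => monic_chebyshevW i)]
        exact det_mul_row _ _
    _ = (∏ k, z k ^ (1 - (N : ℤ)) * (1 - z k)) *
          ((∏ k, z k ^ (N - 1)) * ∏ i, ∏ j ∈ Ioi i, (t i - t j)) := by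
        rw [← mul_assoc]
        congr 1
        rw [← prod_mul_distrib]
        refine prod_congr rfl fun k _ => ?_
        linear_combination (z k - 1) * hcancel k
    _ = _ := by
        simp_rw [← Fin.prod_prod_Ioi_mul, ← prod_mul_distrib, hpair]
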